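/- arXiv:1905.03191 — 6 statements merged into one kernel-verified Lean document; each statement's English description precedes it below -/
import Mathlib

section
/- For every d > 0, the limit h(d) := lim_{s→∞} u_d(s) exists, is finite, and satisfies 0 < h(d) < (π/2)·√(1 + 4τ²), where u_d(s) = ∫_{arcsinh(d)}^{s} d·√((1 + 4τ²·tanh²(r/2))/(sinh²(r) - d²)) dr. -/
open Real Filter MeasureTheory Set Topology

theorem stmt_4 (τ d : ℝ) (hd : 0 < d)
    (u : ℝ → ℝ)
    (hu : ∀ s, u s = ∫ r in Real.arsinh d..s,
      d * Real.sqrt ((1 + 4 * τ ^ 2 * Real.tanh (r / 2) ^ 2) /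
        (Real.sinh r ^ 2 - d ^ 2))) :
    ∃ h : ℝ, 0 < h ∧ h < (Real.pi / 2) * Real.sqrt (1 + 4 * τ ^ 2) ∧
      Tendsto u atTop (nhds h) := by
  set a := Real.arsinh d with ha
  set c := Real.sqrt (1 + 4 * τ ^ 2) with hc
  have hc1 : (1:ℝ) ≤ c := by
    rw [hc]
    nlinarith [Real.sq_sqrt (by positivity : (0:ℝ) ≤ 1 + 4 * τ ^ 2),
      Real.sqrt_nonneg (1 + 4 * τ ^ 2)]
  have hcpos : 0 < c := lt_of_lt_of_le one_pos hc1
  set f : ℝ → ℝ := fun r =>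
    d * Real.sqrt ((1 + 4 * τ ^ 2 * Real.tanh (r / 2) ^ 2) /
      (Real.sinh r ^ 2 - d ^ 2)) with hf
  set φ : ℝ → ℝ := fun r =>
    c * (d * Real.cosh r / (Real.sinh r * Real.sqrt (Real.sinh r ^ 2 - d ^ 2))) with hφ
  set G : ℝ → ℝ := fun r => -(c * Real.arcsin (d / Real.sinh r)) with hG
  have hsa : Real.sinh a = d := Real.sinh_arsinh d
  have ha0 : 0 < a := by rw [ha]; exact Real.arsinh_pos_iff.2 hd
  have hsinh : ∀ r ∈ Ioi a, d < Real.sinh r := fun r hr => by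
    rw [← hsa]; exact Real.sinh_lt_sinh.2 hr
  have hD : ∀ r ∈ Ioi a, 0 < Real.sinh r ^ 2 - d ^ 2 := fun r hr => by
    have := hsinh r hr; nlinarith
  -- derivative of G
  have hderiv : ∀ r ∈ Ioi a, HasDerivAt G (φ r) r := by
    intro r hr
    have hsr : d < Real.sinh r := hsinh r hr
    have hsr0 : 0 < Real.sinh r := lt_trans hd hsr
    have hx0 : 0 < d / Real.sinh r := div_pos hd hsr0
    have hx1 : d / Real.sinh r < 1 := (div_lt_one hsr0).2 hsr
    have hDr : 0 < Real.sinh r ^ 2 - d ^ 2 := hD r hr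
    have hsq : 0 < Real.sqrt (Real.sinh r ^ 2 - d ^ 2) := Real.sqrt_pos.2 hDr
    have hin : HasDerivAt (fun r => d / Real.sinh r)
        ((0 * Real.sinh r - d * Real.cosh r) / Real.sinh r ^ 2) r :=
      (hasDerivAt_const r d).div (Real.hasDerivAt_sinh r) (ne_of_gt hsr0)
    have harc := (Real.hasDerivAt_arcsin (by linarith : d / Real.sinh r ≠ -1)
        (ne_of_lt hx1)).comp r hin
    have hfinal := (harc.const_mul c).neg
    convert hfinal using 1
    · rfl
    · rfl
    case e'_8 => rfl
    have h1 : (1 : ℝ) - (d / Real.sinh r) ^ 2 = (Real.sinh r ^ 2 - d ^ 2) / Real.sinh r ^ 2 := by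
      field_simp
    have h2 : Real.sqrt (1 - (d / Real.sinh r) ^ 2)
        = Real.sqrt (Real.sinh r ^ 2 - d ^ 2) / Real.sinh r := by
      rw [h1, Real.sqrt_div hDr.le, Real.sqrt_sq hsr0.le]
    show φ r = -(c * (1 / Real.sqrt (1 - (d / Real.sinh r) ^ 2) *
      ((0 * Real.sinh r - d * Real.cosh r) / Real.sinh r ^ 2)))
    rw [h2, hφ]
    field_simp
    ring
  have hGcont : ContinuousWithinAt G (Ici a) a := by
    have h1 : ContinuousAt (fun r => d / Real.sinh r) a :=
      continuousAt_const.div Real.continuous_sinh.continuousAt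
        (by rw [hsa]; exact ne_of_gt hd)
    have h2 : ContinuousAt G a :=
      ((Real.continuous_arcsin.continuousAt.comp h1).const_mul c).neg
    exact h2.continuousWithinAt
  have hφ0 : ∀ r ∈ Ioi a, 0 ≤ φ r := by
    intro r hr
    have hsr0 : 0 < Real.sinh r := lt_trans hd (hsinh r hr)
    have hch : 0 < Real.cosh r := Real.cosh_pos r
    have hsq : 0 < Real.sqrt (Real.sinh r ^ 2 - d ^ 2) ∨
        0 = Real.sqrt (Real.sinh r ^ 2 - d ^ 2) :=
      Or.inl (Real.sqrt_pos.2 (hD r hr))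
    have := Real.sqrt_nonneg (Real.sinh r ^ 2 - d ^ 2)
    positivity
  have hGlim : Tendsto G atTop (𝓝 0) := by
    have hsinh_top : Tendsto Real.sinh atTop atTop := by
      apply tendsto_atTop_mono' _ _ tendsto_id
      filter_upwards [eventually_gt_atTop 0] with x hx
      exact le_of_lt (Real.self_lt_sinh_iff.2 hx)
    have h1 : Tendsto (fun r => d / Real.sinh r) atTop (𝓝 0) :=
      Tendsto.div_atTop tendsto_const_nhds hsinh_top
    have h2 : Tendsto (fun r => Real.arcsin (d / Real.sinh r)) atTop (𝓝 (Real.arcsin 0)) :=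
      (Real.continuous_arcsin.continuousAt.tendsto).comp h1
    rw [Real.arcsin_zero] at h2
    simpa using (h2.const_mul c).neg
  have hφint : IntegrableOn φ (Ioi a) :=
    integrableOn_Ioi_deriv_of_nonneg hGcont hderiv hφ0 hGlim
  have hφval : ∫ r in Ioi a, φ r = c * (Real.pi / 2) := by
    have hval := integral_Ioi_of_hasDerivAt_of_nonneg hGcont hderiv hφ0 hGlim
    rw [hval, hG]
    simp only [hsa, div_self (ne_of_gt hd), Real.arcsin_one]
    ring
  -- pointwise bounds
  have hkey : ∀ r ∈ Ioi a, 0 < f r ∧ f r < φ r := by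
    intro r hr
    have hDr : 0 < Real.sinh r ^ 2 - d ^ 2 := hD r hr
    have hsr0 : 0 < Real.sinh r := lt_trans hd (hsinh r hr)
    have hsq : 0 < Real.sqrt (Real.sinh r ^ 2 - d ^ 2) := Real.sqrt_pos.2 hDr
    have hN : (0:ℝ) < 1 + 4 * τ ^ 2 * Real.tanh (r / 2) ^ 2 := by positivity
    refine ⟨?_, ?_⟩
    · have : 0 < (1 + 4 * τ ^ 2 * Real.tanh (r / 2) ^ 2) / (Real.sinh r ^ 2 - d ^ 2) :=
        div_pos hN hDr
      rw [hf]
      positivity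
    · have htanh : Real.tanh (r / 2) ^ 2 ≤ 1 := by
        have hch : 0 < Real.cosh (r / 2) := Real.cosh_pos (r / 2)
        have hlt : Real.sinh (r / 2) ^ 2 < Real.cosh (r / 2) ^ 2 := by
          have := Real.cosh_sq (r / 2); nlinarith
        rw [Real.tanh_eq_sinh_div_cosh, div_pow, div_le_one (by positivity)]
        linarith
      have hNle : 1 + 4 * τ ^ 2 * Real.tanh (r / 2) ^ 2 ≤ 1 + 4 * τ ^ 2 := by nlinarith
      have h1 : f r ≤ d * (c / Real.sqrt (Real.sinh r ^ 2 - d ^ 2)) := by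
        rw [hf, hc, ← Real.sqrt_div (by positivity)]
        have hdiv : (1 + 4 * τ ^ 2 * Real.tanh (r / 2) ^ 2) / (Real.sinh r ^ 2 - d ^ 2)
            ≤ (1 + 4 * τ ^ 2) / (Real.sinh r ^ 2 - d ^ 2) := by gcongr
        exact mul_le_mul_of_nonneg_left (Real.sqrt_le_sqrt hdiv) hd.le
      refine lt_of_le_of_lt h1 ?_
      have hcs : Real.sinh r < Real.cosh r := by
        have := Real.cosh_sq r
        have hch : 0 < Real.cosh r := Real.cosh_pos r
        nlinarith
      show d * (c / Real.sqrt (Real.sinh r ^ 2 - d ^ 2)) <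
        c * (d * Real.cosh r / (Real.sinh r * Real.sqrt (Real.sinh r ^ 2 - d ^ 2)))
      rw [mul_div_assoc', mul_div_assoc', div_lt_div_iff₀ (by positivity) (by positivity)]
      nlinarith [mul_pos (mul_pos (mul_pos hd hcpos) hsq) (sub_pos.2 hcs)]
  -- f is measurable
  have htanh_cont : Continuous Real.tanh := by
    have he : Real.tanh = fun x => Real.sinh x / Real.cosh x :=
      funext fun x => Real.tanh_eq_sinh_div_cosh x
    rw [he]
    exact Real.continuous_sinh.div Real.continuous_cosh fun x => (Real.cosh_pos x).ne'
  have hfm : Measurable f := by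
    apply Measurable.mul measurable_const
    apply (Real.continuous_sqrt.measurable).comp
    exact Measurable.div
      (continuous_const.add (continuous_const.mul
        ((htanh_cont.comp (continuous_id.div_const 2)).pow 2))).measurable
      ((Real.continuous_sinh.pow 2).sub continuous_const).measurable
  -- integrability of f
  have hfint : IntegrableOn f (Ioi a) := by
    apply Integrable.mono' hφint (hfm.aestronglyMeasurable.restrict)
    exact (ae_restrict_iff' measurableSet_Ioi).2 (Filter.Eventually.of_forall fun r hr => by
      rw [Real.norm_eq_abs, abs_of_nonneg (hkey r hr).1.le]
      exact (hkey r hr).2.le)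
  set h := ∫ r in Ioi a, f r with hh
  refine ⟨h, ?_, ?_, ?_⟩
  · have hae : 0 ≤ᵐ[volume.restrict (Ioi a)] f :=
      (ae_restrict_iff' measurableSet_Ioi).2
        (Filter.Eventually.of_forall fun r hr => (hkey r hr).1.le)
    rw [hh, setIntegral_pos_iff_support_of_nonneg_ae hae hfint]
    have hsub : Ioi a ⊆ Function.support f ∩ Ioi a := fun r hr =>
      ⟨ne_of_gt (hkey r hr).1, hr⟩
    calc (0:ENNReal) < volume (Ioi a) := by simp [Real.volume_Ioi]
      _ ≤ volume (Function.support f ∩ Ioi a) := measure_mono hsub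
  · have hlt : h < ∫ r in Ioi a, φ r := by
      have hpos : 0 < ∫ r in Ioi a, (φ r - f r) := by
        have hae : 0 ≤ᵐ[volume.restrict (Ioi a)] fun r => φ r - f r :=
          (ae_restrict_iff' measurableSet_Ioi).2
            (Filter.Eventually.of_forall fun r hr => (sub_pos.2 (hkey r hr).2).le)
        rw [setIntegral_pos_iff_support_of_nonneg_ae hae (hφint.sub hfint)]
        have hsub : Ioi a ⊆ Function.support (fun r => φ r - f r) ∩ Ioi a := fun r hr =>
          ⟨ne_of_gt (sub_pos.2 (hkey r hr).2), hr⟩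
        calc (0:ENNReal) < volume (Ioi a) := by simp [Real.volume_Ioi]
          _ ≤ volume _ := measure_mono hsub
      rw [integral_sub hφint hfint] at hpos
      linarith
    rw [hφval] at hlt
    linarith [hlt]
  · have := intervalIntegral_tendsto_integral_Ioi a hfint tendsto_id
    refine this.congr fun s => ?_
    rw [hu s]
    rfl
end

section
/- For d > 0 and s > arcsinh(d), with the substitution t = arccosh(cosh(r)/√(1+d²)), the function λ_d satisfies λ_d(arccosh(√(1+d²)·cosh(s))) = ∫_0^s d/√((1+d²)·cosh²(t) − 1) dt for all s > 0. -/
open Real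

/-- The inverse hyperbolic cosine, `arcosh x = log (x + √(x² − 1))`. -/
noncomputable def arcosh (x : ℝ) : ℝ := Real.log (x + Real.sqrt (x ^ 2 - 1))

lemma cosh_arcosh' {x : ℝ} (hx : 1 ≤ x) : Real.cosh (_root_.arcosh x) = x := by
  have h1 : (0:ℝ) ≤ x ^ 2 - 1 := by nlinarith
  have hs : Real.sqrt (x ^ 2 - 1) ^ 2 = x ^ 2 - 1 := Real.sq_sqrt h1
  have hs0 : 0 ≤ Real.sqrt (x ^ 2 - 1) := Real.sqrt_nonneg _
  have hu : 0 < x + Real.sqrt (x ^ 2 - 1) := by nlinarith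
  rw [_root_.arcosh, Real.cosh_log hu]
  field_simp
  nlinarith

lemma sinh_arcosh' {x : ℝ} (hx : 1 ≤ x) :
    Real.sinh (_root_.arcosh x) = Real.sqrt (x ^ 2 - 1) := by
  have h1 : (0:ℝ) ≤ x ^ 2 - 1 := by nlinarith
  have hs : Real.sqrt (x ^ 2 - 1) ^ 2 = x ^ 2 - 1 := Real.sq_sqrt h1
  have hs0 : 0 ≤ Real.sqrt (x ^ 2 - 1) := Real.sqrt_nonneg _
  have hu : 0 < x + Real.sqrt (x ^ 2 - 1) := by nlinarith
  rw [_root_.arcosh, Real.sinh_log hu]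
  field_simp
  nlinarith

lemma hasDerivAt_arcosh' {x : ℝ} (hx : 1 < x) :
    HasDerivAt _root_.arcosh (1 / Real.sqrt (x ^ 2 - 1)) x := by
  have h1 : (0:ℝ) < x ^ 2 - 1 := by nlinarith
  have hs : 0 < Real.sqrt (x ^ 2 - 1) := Real.sqrt_pos.mpr h1
  have hsq : Real.sqrt (x ^ 2 - 1) ^ 2 = x ^ 2 - 1 := Real.sq_sqrt h1.le
  have hu : 0 < x + Real.sqrt (x ^ 2 - 1) := by positivity
  have hd1 : HasDerivAt (fun y : ℝ => y ^ 2 - 1) (2 * x) x := by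
    simpa using (hasDerivAt_pow 2 x).sub_const 1
  have hd2 : HasDerivAt (fun y : ℝ => Real.sqrt (y ^ 2 - 1))
      (1 / (2 * Real.sqrt (x ^ 2 - 1)) * (2 * x)) x :=
    (Real.hasDerivAt_sqrt h1.ne').comp x hd1
  have hd3 : HasDerivAt (fun y : ℝ => y + Real.sqrt (y ^ 2 - 1))
      (1 + 1 / (2 * Real.sqrt (x ^ 2 - 1)) * (2 * x)) x := (hasDerivAt_id x).add hd2
  have hd4 := (Real.hasDerivAt_log hu.ne').comp x hd3
  have : _root_.arcosh = fun y => Real.log (y + Real.sqrt (y ^ 2 - 1)) := rfl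
  rw [this]
  refine hd4.congr_deriv (Eq.symm ?_)
  field_simp
  nlinarith

theorem stmt_6 (d : ℝ) (hd : 0 < d)
    (lam : ℝ → ℝ)
    (hlam : ∀ s, lam s = ∫ r in Real.arsinh d..s, d / Real.sqrt (Real.sinh r ^ 2 - d ^ 2)) :
    ∀ s : ℝ, 0 < s →
      lam (_root_.arcosh (Real.sqrt (1 + d ^ 2) * Real.cosh s)) =
        ∫ t in (0 : ℝ)..s, d / Real.sqrt ((1 + d ^ 2) * Real.cosh t ^ 2 - 1) := by
  intro s hs
  have hd2 : (0:ℝ) < 1 + d ^ 2 := by positivity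
  set c : ℝ := Real.sqrt (1 + d ^ 2) with hcdef
  have hc2 : c ^ 2 = 1 + d ^ 2 := Real.sq_sqrt hd2.le
  have hc0 : 0 ≤ c := Real.sqrt_nonneg _
  have hc1 : 1 < c := by nlinarith [hd.le]
  -- positivity of the RHS denominator expression
  have hcosh1 : ∀ t : ℝ, 1 ≤ Real.cosh t ^ 2 := by
    intro t
    nlinarith [Real.one_le_cosh t]
  have hA : ∀ t : ℝ, 0 < (1 + d ^ 2) * Real.cosh t ^ 2 - 1 := by
    intro t
    nlinarith [hcosh1 t, mul_pos hd hd, sq_nonneg d, mul_le_mul_of_nonneg_left (hcosh1 t) hd2.le]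
  set φ : ℝ → ℝ := fun t => _root_.arcosh (c * Real.cosh t) with hφdef
  set φ' : ℝ → ℝ := fun t =>
    c * Real.sinh t / Real.sqrt ((1 + d ^ 2) * Real.cosh t ^ 2 - 1) with hφ'def
  have hccosh : ∀ t : ℝ, 1 < c * Real.cosh t := by
    intro t
    nlinarith [Real.one_le_cosh t]
  have hsqA : ∀ t : ℝ, (c * Real.cosh t) ^ 2 - 1 = (1 + d ^ 2) * Real.cosh t ^ 2 - 1 := by
    intro t; rw [mul_pow, hc2]
  -- derivative of φ
  have hφd : ∀ t : ℝ, HasDerivAt φ (φ' t) t := by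
    intro t
    have inner : HasDerivAt (fun t : ℝ => c * Real.cosh t) (c * Real.sinh t) t :=
      (Real.hasDerivAt_cosh t).const_mul c
    have outer := hasDerivAt_arcosh' (hccosh t)
    have := outer.comp t inner
    simp only [hφ'def]
    refine this.congr_deriv (Eq.symm ?_)
    rw [hsqA t]
    ring
  have hφcont : Continuous φ := by
    refine continuous_iff_continuousAt.mpr fun t => (hφd t).continuousAt
  -- φ 0 = arsinh d
  have hφ0 : φ 0 = Real.arsinh d := by
    have h1 : Real.sqrt (1 + d ^ 2) ^ 2 - 1 = d ^ 2 := by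
      rw [Real.sq_sqrt hd2.le]; ring
    simp only [hφdef, hcdef, Real.cosh_zero, mul_one, Real.arsinh, _root_.arcosh, h1,
      Real.sqrt_sq hd.le]
    rw [add_comm (Real.sqrt (1 + d ^ 2)) d]
  -- sinh (φ t)
  have hsinhφ : ∀ t : ℝ, Real.sinh (φ t) = Real.sqrt ((1 + d ^ 2) * Real.cosh t ^ 2 - 1) := by
    intro t
    show Real.sinh (_root_.arcosh (c * Real.cosh t)) = _
    rw [sinh_arcosh' (hccosh t).le, hsqA t]
  -- key pointwise identity for t > 0
  have hkey : ∀ t : ℝ, 0 < t →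
      φ' t * (d / Real.sqrt (Real.sinh (φ t) ^ 2 - d ^ 2)) =
        d / Real.sqrt ((1 + d ^ 2) * Real.cosh t ^ 2 - 1) := by
    intro t ht
    have hst : 0 < Real.sinh t := Real.sinh_pos_iff.mpr ht
    have h1 : Real.sinh (φ t) ^ 2 - d ^ 2 = (1 + d ^ 2) * Real.sinh t ^ 2 := by
      rw [hsinhφ t, Real.sq_sqrt (hA t).le, Real.cosh_sq t]; ring
    have h2 : Real.sqrt (Real.sinh (φ t) ^ 2 - d ^ 2) = c * Real.sinh t := by
      rw [h1, Real.sqrt_mul hd2.le, Real.sqrt_sq hst.le]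
    have h3 : 0 < Real.sqrt ((1 + d ^ 2) * Real.cosh t ^ 2 - 1) := Real.sqrt_pos.mpr (hA t)
    rw [h2]
    show c * Real.sinh t / Real.sqrt ((1 + d ^ 2) * Real.cosh t ^ 2 - 1) *
      (d / (c * Real.sinh t)) = _
    have hc0' : (0:ℝ) < c := lt_trans one_pos hc1
    field_simp
  -- continuity of the RHS integrand
  have hh_cont : Continuous fun t => d / Real.sqrt ((1 + d ^ 2) * Real.cosh t ^ 2 - 1) := by
    apply continuous_const.div
    · exact ((continuous_const.mul (Real.continuous_cosh.pow 2)).sub continuous_const).sqrt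
    · intro t
      exact (Real.sqrt_pos.mpr (hA t)).ne'
  -- strict monotonicity on [0, s]
  have hφ'pos : ∀ t ∈ Set.Ioo (0:ℝ) s, 0 < φ' t := by
    intro t ht
    have hst : 0 < Real.sinh t := Real.sinh_pos_iff.mpr ht.1
    exact div_pos (mul_pos (lt_trans one_pos hc1) hst) (Real.sqrt_pos.mpr (hA t))
  have hmono : StrictMonoOn φ (Set.Icc 0 s) := by
    apply strictMonoOn_of_deriv_pos (convex_Icc 0 s) hφcont.continuousOn
    intro t ht
    rw [interior_Icc] at ht
    rw [(hφd t).deriv]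
    exact hφ'pos t ht
  have hinj : Set.InjOn φ (Set.Icc 0 s) := hmono.injOn
  -- a.e. equality on Icc 0 s
  have haeIcc : (fun x => |φ' x| • (d / Real.sqrt (Real.sinh (φ x) ^ 2 - d ^ 2)))
      =ᵐ[MeasureTheory.volume.restrict (Set.Icc (0:ℝ) s)]
      fun x => d / Real.sqrt ((1 + d ^ 2) * Real.cosh x ^ 2 - 1) := by
    rw [← MeasureTheory.restrict_Ioo_eq_restrict_Icc]
    have := MeasureTheory.ae_restrict_mem (μ := MeasureTheory.volume)
      (measurableSet_Ioo (a := (0:ℝ)) (b := s))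
    filter_upwards [this] with x hx
    rw [smul_eq_mul, abs_of_pos (hφ'pos x hx)]
    exact hkey x hx.1
  have haeIcc2 : (fun x => φ' x • ((fun r => d / Real.sqrt (Real.sinh r ^ 2 - d ^ 2)) ∘ φ) x)
      =ᵐ[MeasureTheory.volume.restrict (Set.Icc (0:ℝ) s)]
      fun x => d / Real.sqrt ((1 + d ^ 2) * Real.cosh x ^ 2 - 1) := by
    rw [← MeasureTheory.restrict_Ioo_eq_restrict_Icc]
    have := MeasureTheory.ae_restrict_mem (μ := MeasureTheory.volume)
      (measurableSet_Ioo (a := (0:ℝ)) (b := s))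
    filter_upwards [this] with x hx
    rw [smul_eq_mul]
    exact hkey x hx.1
  have hInt_h : MeasureTheory.IntegrableOn
      (fun t => d / Real.sqrt ((1 + d ^ 2) * Real.cosh t ^ 2 - 1)) (Set.Icc (0:ℝ) s) :=
    hh_cont.integrableOn_Icc
  -- integrability of g on the image
  have hg1 : MeasureTheory.IntegrableOn
      (fun r => d / Real.sqrt (Real.sinh r ^ 2 - d ^ 2)) (φ '' Set.Icc (0:ℝ) s) := by
    rw [MeasureTheory.integrableOn_image_iff_integrableOn_abs_deriv_smul measurableSet_Icc
      (fun x _ => (hφd x).hasDerivWithinAt) hinj]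
    exact hInt_h.congr haeIcc.symm
  -- integrability of φ' • g ∘ φ
  have hg2 : MeasureTheory.IntegrableOn
      (fun x => φ' x • ((fun r => d / Real.sqrt (Real.sinh r ^ 2 - d ^ 2)) ∘ φ) x)
      (Set.Icc (0:ℝ) s) :=
    hInt_h.congr haeIcc2.symm
  -- change of variables
  have hcv := intervalIntegral.integral_comp_smul_deriv'''
    (f := φ) (f' := φ') (g := fun r => d / Real.sqrt (Real.sinh r ^ 2 - d ^ 2))
    (a := 0) (b := s)
    hφcont.continuousOn
    (by
      rw [min_eq_left hs.le, max_eq_right hs.le]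
      exact fun x _ => (hφd x).hasDerivWithinAt)
    (by
      rw [min_eq_left hs.le, max_eq_right hs.le]
      intro r hr
      obtain ⟨t, ht, rfl⟩ := hr
      apply ContinuousAt.continuousWithinAt
      have hpos : 0 < Real.sinh (φ t) ^ 2 - d ^ 2 := by
        rw [hsinhφ t, Real.sq_sqrt (hA t).le]
        have hst : 0 < Real.sinh t := Real.sinh_pos_iff.mpr ht.1
        nlinarith [Real.cosh_sq t]
      apply ContinuousAt.div continuousAt_const
      · exact ((Real.continuous_sinh.pow 2).sub continuous_const).sqrt.continuousAt
      · exact (Real.sqrt_pos.mpr hpos).ne')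
    (by rw [Set.uIcc_of_le hs.le]; exact hg1)
    (by rw [Set.uIcc_of_le hs.le]; exact hg2)
  -- finish
  rw [hφ0] at hcv
  have hφs : φ s = _root_.arcosh (c * Real.cosh s) := rfl
  rw [hlam, ← hφs, ← hcv]
  apply intervalIntegral.integral_congr_ae
  filter_upwards with x hx
  rw [Set.uIoc_of_le hs.le] at hx
  rw [smul_eq_mul]
  exact hkey x hx.1
end

section
/- With λ_d(s) = ∫_{arcsinh(d)}^{s} d/√(sinh²(r) − d²) dr and R(d) = (3/2)·log(d), it holds that lim_{d→∞} λ_d(R(d)) = π/2. -/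
open Real Filter MeasureTheory Set

namespace Stmt10


noncomputable def A (d : ℝ) : ℝ := Real.arsinh d
noncomputable def B (d : ℝ) : ℝ := 3 / 2 * Real.log d
noncomputable def F (d r : ℝ) : ℝ := Real.arcsin (Real.sqrt (Real.sinh r ^ 2 - d ^ 2) / Real.cosh r)

lemma exp_B {d : ℝ} (hd : 9 ≤ d) : Real.exp (B d) = d * Real.sqrt d := by
  have hd0 : (0:ℝ) < d := by linarith
  rw [B, show (3:ℝ)/2 * Real.log d = Real.log d * ((3:ℝ)/2) by ring, ← Real.rpow_def_of_pos hd0,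
    show ((3:ℝ)/2) = 1 + 1/2 by norm_num, Real.rpow_add hd0, Real.rpow_one, ← Real.sqrt_eq_rpow]

lemma sqrt_d_ge {d : ℝ} (hd : 9 ≤ d) : 3 ≤ Real.sqrt d := by
  rw [show (3:ℝ) = Real.sqrt 9 by rw [show (9:ℝ) = 3^2 by norm_num, Real.sqrt_sq]; norm_num]
  exact Real.sqrt_le_sqrt hd

lemma d_lt_sinh_B {d : ℝ} (hd : 9 ≤ d) : d < Real.sinh (B d) := by
  have hd0 : (0:ℝ) < d := by linarith
  have h1 : Real.exp (B d) = d * Real.sqrt d := exp_B hd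
  have h2 : 3 ≤ Real.sqrt d := sqrt_d_ge hd
  have h3 : Real.exp (-(B d)) ≤ 1 := by
    rw [Real.exp_neg, h1]
    rw [inv_le_one_iff₀]
    right; nlinarith
  rw [Real.sinh_eq, h1]
  nlinarith [Real.exp_pos (-(B d))]

lemma A_lt_B {d : ℝ} (hd : 9 ≤ d) : A d < B d := by
  have := d_lt_sinh_B hd
  rw [A]
  exact Real.sinh_lt_sinh.mp (by rwa [Real.sinh_arsinh])




lemma g_pos {d r : ℝ} (hd : 9 ≤ d) (hr : A d < r) : 0 < Real.sinh r ^ 2 - d ^ 2 := by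
  have h1 : d < Real.sinh r := by
    have := Real.sinh_lt_sinh.mpr hr
    rwa [A, Real.sinh_arsinh] at this
  nlinarith

lemma sinh_lb {d r : ℝ} (hd : 9 ≤ d) (hr : A d ≤ r) : r - A d ≤ Real.sinh r - d := by
  have := Real.sinh_sub_id_strictMono.monotone hr
  have h2 : Real.sinh (A d) = d := by rw [A, Real.sinh_arsinh]
  linarith [this]

lemma integrable_phi {d : ℝ} (hd : 9 ≤ d) :
    IntegrableOn (fun r => d / Real.sqrt (Real.sinh r ^ 2 - d ^ 2)) (Icc (A d) (B d)) volume := by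
  have hd0 : (0:ℝ) < d := by linarith
  have hab := (A_lt_B hd).le
  rw [integrableOn_Icc_iff_integrableOn_Ioc]
  have h1 : IntervalIntegrable (fun x : ℝ => x ^ (-(1/2) : ℝ)) volume 0 (B d - A d) :=
    intervalIntegral.intervalIntegrable_rpow' (by norm_num)
  have h2 := h1.comp_sub_right (A d)
  simp only [zero_add, sub_add_cancel] at h2
  have h3 := h2.const_mul (Real.sqrt d)
  rw [intervalIntegrable_iff_integrableOn_Ioc_of_le hab] at h3
  refine Integrable.mono h3 ?_ ?_
  · refine (Measurable.aestronglyMeasurable ?_)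
    exact measurable_const.div ((Real.continuous_sqrt.comp (by continuity)).measurable)
  · filter_upwards [ae_restrict_mem measurableSet_Ioc] with r hr
    have hra : 0 < r - A d := by linarith [hr.1]
    have hsr : d < Real.sinh r := by
      have := Real.sinh_lt_sinh.mpr hr.1
      rwa [A, Real.sinh_arsinh] at this
    have hg : 0 < Real.sinh r ^ 2 - d ^ 2 := g_pos hd hr.1
    have hlb := sinh_lb hd hr.1.le
    have hge : (r - A d) * d ≤ Real.sinh r ^ 2 - d ^ 2 := by nlinarith
    have e1 : Real.sqrt ((r - A d) * d) ≤ Real.sqrt (Real.sinh r ^ 2 - d ^ 2) :=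
      Real.sqrt_le_sqrt hge
    have e2 : Real.sqrt ((r - A d) * d) = Real.sqrt (r - A d) * Real.sqrt d :=
      Real.sqrt_mul hra.le d
    have hsd : 0 < Real.sqrt d := Real.sqrt_pos.mpr hd0
    have hsra : 0 < Real.sqrt (r - A d) := Real.sqrt_pos.mpr hra
    have hsg : 0 < Real.sqrt (Real.sinh r ^ 2 - d ^ 2) := Real.sqrt_pos.mpr hg
    have hrp : (r - A d) ^ (-(1/2):ℝ) = (Real.sqrt (r - A d))⁻¹ := by
      rw [Real.rpow_neg hra.le, ← Real.sqrt_eq_rpow]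
    rw [Real.norm_eq_abs, Real.norm_eq_abs, abs_of_nonneg (by positivity),
      abs_of_nonneg (by rw [hrp]; positivity), hrp]
    rw [div_le_iff₀ hsg, mul_comm (Real.sqrt d), mul_assoc, le_inv_mul_iff₀ hsra]
    nlinarith [Real.mul_self_sqrt hd0.le, e1, e2, hsd.le, hsg.le, hsra.le]



lemma hasDeriv {d r : ℝ} (hd : 9 ≤ d) (hg : 0 < Real.sinh r ^ 2 - d ^ 2) :
    HasDerivAt (F d)
      (Real.cosh (A d) * Real.sinh r / (Real.cosh r * Real.sqrt (Real.sinh r ^ 2 - d ^ 2))) r := by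
  have hd0 : (0:ℝ) < d := by linarith
  set g : ℝ := Real.sinh r ^ 2 - d ^ 2 with hgdef
  have hC : 0 < Real.cosh r := Real.cosh_pos r
  have hc2 : Real.cosh (A d) ^ 2 = 1 + d ^ 2 := by
    rw [A, Real.cosh_sq, Real.sinh_arsinh]; ring
  have hcpos : 0 < Real.cosh (A d) := Real.cosh_pos _
  have hsg : 0 < Real.sqrt g := Real.sqrt_pos.mpr hg
  have e0 : Real.sqrt g ^ 2 = g := Real.sq_sqrt hg.le
  have h1 : HasDerivAt (fun r => Real.sinh r ^ 2 - d ^ 2) (2 * Real.sinh r * Real.cosh r) r := by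
    have := ((Real.hasDerivAt_sinh r).pow 2).sub_const (d ^ 2)
    refine this.congr_deriv (Eq.symm ?_)
    push_cast; ring
  have h2 : HasDerivAt (fun r => Real.sqrt (Real.sinh r ^ 2 - d ^ 2))
      (Real.sinh r * Real.cosh r / Real.sqrt g) r := by
    have := (Real.hasDerivAt_sqrt hg.ne').comp r h1
    refine this.congr_deriv (Eq.symm ?_)
    field_simp
  have h3 : HasDerivAt (fun r => Real.sqrt (Real.sinh r ^ 2 - d ^ 2) / Real.cosh r)
      ((Real.sinh r * Real.cosh r / Real.sqrt g * Real.cosh r -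
        Real.sqrt g * Real.sinh r) / Real.cosh r ^ 2) r :=
    h2.div (Real.hasDerivAt_cosh r) hC.ne'
  have hglt : g < Real.cosh r ^ 2 := by
    have := Real.cosh_sq r
    nlinarith
  have hxlt : Real.sqrt g / Real.cosh r < 1 := by
    rw [div_lt_one hC]
    calc Real.sqrt g < Real.sqrt (Real.cosh r ^ 2) := Real.sqrt_lt_sqrt hg.le hglt
    _ = Real.cosh r := Real.sqrt_sq hC.le
  have hx0 : 0 ≤ Real.sqrt g / Real.cosh r := by positivity
  have h4 := (Real.hasDerivAt_arcsin (by linarith) hxlt.ne).comp r h3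
  have e1 : 1 - (Real.sqrt g / Real.cosh r) ^ 2 = (Real.cosh (A d) / Real.cosh r) ^ 2 := by
    rw [div_pow, div_pow, e0, hc2]
    field_simp
    linarith [Real.cosh_sq r, hgdef]
  have e2 : Real.sqrt (1 - (Real.sqrt g / Real.cosh r) ^ 2) = Real.cosh (A d) / Real.cosh r := by
    rw [e1, Real.sqrt_sq (by positivity)]
  refine h4.congr_deriv (Eq.symm ?_)
  rw [e2]
  have hc2' : Real.cosh r ^ 2 - g = Real.cosh (A d) ^ 2 := by
    have := Real.cosh_sq r
    nlinarith
  field_simp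
  linear_combination (Real.sinh r) * e0 -
    (Real.sinh r) * hc2'



lemma contF (d : ℝ) : Continuous (F d) := by
  apply Real.continuous_arcsin.comp
  exact (Real.continuous_sqrt.comp (by continuity)).div Real.continuous_cosh
    fun x => (Real.cosh_pos x).ne'

lemma F_at_A (d : ℝ) : F d (A d) = 0 := by
  simp [F, A, Real.sinh_arsinh, Real.arcsin_zero]

lemma upper {d : ℝ} (hd : 9 ≤ d) :
    (∫ r in A d..B d, d / Real.sqrt (Real.sinh r ^ 2 - d ^ 2)) ≤ F d (B d) := by
  have hd0 : (0:ℝ) < d := by linarith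
  have h := intervalIntegral.integral_le_sub_of_hasDeriv_right_of_le (A_lt_B hd).le
    ((contF d).continuousOn)
    (fun x hx => ((hasDeriv hd (g_pos hd hx.1)).hasDerivWithinAt))
    (integrable_phi hd) ?_
  · rw [F_at_A d, sub_zero] at h; exact h
  · intro x hx
    have hg := g_pos hd hx.1
    have hsg : 0 < Real.sqrt (Real.sinh x ^ 2 - d ^ 2) := Real.sqrt_pos.mpr hg
    have hC : 0 < Real.cosh x := Real.cosh_pos x
    have hkey : d * Real.cosh x ≤ Real.cosh (A d) * Real.sinh x := by
      have h0 : 0 ≤ Real.sinh (x - A d) := by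
        have : (0:ℝ) < x - A d := by linarith [hx.1]
        nlinarith [Real.sinh_pos_iff.mpr this]
      have := Real.sinh_sub x (A d)
      rw [A] at *
      nlinarith [Real.sinh_arsinh d, this]
    rw [div_le_div_iff₀ hsg (by positivity)]
    nlinarith [hsg.le]

lemma lower {d : ℝ} (hd : 9 ≤ d) :
    d / Real.cosh (A d) * F d (B d) ≤
      ∫ r in A d..B d, d / Real.sqrt (Real.sinh r ^ 2 - d ^ 2) := by
  have hd0 : (0:ℝ) < d := by linarith
  have hcpos : 0 < Real.cosh (A d) := Real.cosh_pos _
  have h := intervalIntegral.sub_le_integral_of_hasDeriv_right_of_le (g := fun r =>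
      d / Real.cosh (A d) * F d r)
    (g' := fun x => d / Real.cosh (A d) *
      (Real.cosh (A d) * Real.sinh x / (Real.cosh x * Real.sqrt (Real.sinh x ^ 2 - d ^ 2))))
    (A_lt_B hd).le
    ((continuous_const.mul (contF d)).continuousOn)
    (fun x hx => (((hasDeriv hd (g_pos hd hx.1)).const_mul _).hasDerivWithinAt))
    (integrable_phi hd) ?_
  · simp only [F_at_A d, mul_zero, sub_zero] at h; exact h
  · intro x hx
    have hg := g_pos hd hx.1
    have hsg : 0 < Real.sqrt (Real.sinh x ^ 2 - d ^ 2) := Real.sqrt_pos.mpr hg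
    have hC : 0 < Real.cosh x := Real.cosh_pos x
    have hSC : Real.sinh x ≤ Real.cosh x := (Real.sinh_lt_cosh x).le
    have hS : d < Real.sinh x := by
      have := Real.sinh_lt_sinh.mpr hx.1
      rwa [A, Real.sinh_arsinh] at this
    have key : d / Real.cosh (A d) *
        (Real.cosh (A d) * Real.sinh x / (Real.cosh x * Real.sqrt (Real.sinh x ^ 2 - d ^ 2))) =
        d * Real.sinh x / (Real.cosh x * Real.sqrt (Real.sinh x ^ 2 - d ^ 2)) := by
      field_simp
    rw [key, div_le_div_iff₀ (by positivity) hsg]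
    nlinarith [mul_le_mul_of_nonneg_right (mul_le_mul_of_nonneg_left hSC hd0.le) hsg.le]


lemma cosh_B_sq_ge {d : ℝ} (hd : 9 ≤ d) : d ^ 3 / 4 ≤ Real.cosh (B d) ^ 2 := by
  have hd0 : (0:ℝ) < d := by linarith
  have h1 : Real.exp (B d) = d * Real.sqrt d := exp_B hd
  have h0 : 0 ≤ d * Real.sqrt d := by positivity
  have h3 : d * Real.sqrt d / 2 ≤ Real.cosh (B d) := by
    rw [Real.cosh_eq, h1]
    nlinarith [Real.exp_pos (-(B d))]
  have h2 : (d * Real.sqrt d) ^ 2 = d ^ 3 := by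
    rw [mul_pow, Real.sq_sqrt hd0.le]; ring
  nlinarith [h3, h0, h2]

lemma tendsto_ratio : Tendsto (fun d => (1 + d ^ 2) / Real.cosh (B d) ^ 2) atTop (nhds 0) := by
  have h8 : Tendsto (fun d : ℝ => 8 / d) atTop (nhds 0) :=
    Tendsto.div_atTop tendsto_const_nhds tendsto_id
  refine tendsto_of_tendsto_of_tendsto_of_le_of_le' tendsto_const_nhds h8 ?_ ?_
  · filter_upwards with d; positivity
  · filter_upwards [eventually_ge_atTop (9:ℝ)] with d hd
    have hd0 : (0:ℝ) < d := by linarith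
    have hc := cosh_B_sq_ge hd
    have hcpos : 0 < Real.cosh (B d) ^ 2 := by positivity
    rw [div_le_div_iff₀ hcpos hd0]
    nlinarith

lemma tendsto_inner :
    Tendsto (fun d => Real.sqrt (Real.sinh (B d) ^ 2 - d ^ 2) / Real.cosh (B d)) atTop (nhds 1) := by
  have h1 : Tendsto (fun d => Real.sqrt (1 - (1 + d ^ 2) / Real.cosh (B d) ^ 2)) atTop (nhds 1) := by
    have h := Tendsto.sub (g := fun d : ℝ => (1 + d ^ 2) / Real.cosh (B d) ^ 2)
      (tendsto_const_nhds (x := (1:ℝ)) (f := atTop)) tendsto_ratio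
    rw [sub_zero] at h
    exact (Real.continuous_sqrt.tendsto' 1 1 Real.sqrt_one).comp h
  refine Tendsto.congr' ?_ h1
  filter_upwards [eventually_ge_atTop (9:ℝ)] with d hd
  have hg := g_pos hd (A_lt_B hd)
  have hC : 0 < Real.cosh (B d) := Real.cosh_pos _
  have hcpos : 0 < Real.cosh (B d) ^ 2 := by positivity
  have e : 1 - (1 + d ^ 2) / Real.cosh (B d) ^ 2 =
      (Real.sinh (B d) ^ 2 - d ^ 2) / Real.cosh (B d) ^ 2 := by
    field_simp
    linarith [Real.cosh_sq (B d)]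
  rw [e, Real.sqrt_div hg.le, Real.sqrt_sq hC.le]

lemma tendsto_U : Tendsto (fun d => F d (B d)) atTop (nhds (π / 2)) := by
  have := (Real.continuous_arcsin.tendsto' 1 (π / 2) Real.arcsin_one).comp tendsto_inner
  exact this

lemma tendsto_dc : Tendsto (fun d => d / Real.cosh (A d)) atTop (nhds 1) := by
  have h0 : Tendsto (fun d : ℝ => 1 / (1 + d ^ 2)) atTop (nhds 0) :=
    Tendsto.div_atTop tendsto_const_nhds
      (tendsto_atTop_add_const_left _ 1 (tendsto_pow_atTop two_ne_zero))
  have h1 : Tendsto (fun d : ℝ => Real.sqrt (1 - 1 / (1 + d ^ 2))) atTop (nhds 1) := by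
    have h := Tendsto.sub (g := fun d : ℝ => 1 / (1 + d ^ 2))
      (tendsto_const_nhds (x := (1:ℝ)) (f := atTop)) h0
    rw [sub_zero] at h
    exact (Real.continuous_sqrt.tendsto' 1 1 Real.sqrt_one).comp h
  refine Tendsto.congr' ?_ h1
  filter_upwards [eventually_ge_atTop (0:ℝ)] with d hd
  have h2 : (0:ℝ) < 1 + d ^ 2 := by positivity
  have e : 1 - 1 / (1 + d ^ 2) = d ^ 2 / (1 + d ^ 2) := by field_simp; ring
  rw [e, Real.sqrt_div (by positivity) _, Real.sqrt_sq hd, A, Real.cosh_arsinh]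

end Stmt10

theorem stmt_10 :
    Tendsto (fun d : ℝ =>
      ∫ r in Real.arsinh d..(3 / 2) * Real.log d,
        d / Real.sqrt (Real.sinh r ^ 2 - d ^ 2))
      atTop (nhds (Real.pi / 2)) := by
  have hL : Tendsto (fun d : ℝ => d / Real.cosh (Stmt10.A d) * Stmt10.F d (Stmt10.B d))
      atTop (nhds (Real.pi / 2)) := by
    have := Stmt10.tendsto_dc.mul Stmt10.tendsto_U
    rwa [one_mul] at this
  refine tendsto_of_tendsto_of_tendsto_of_le_of_le' hL Stmt10.tendsto_U ?_ ?_
  · filter_upwards [eventually_ge_atTop (9:ℝ)] with d hd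
    exact Stmt10.lower hd
  · filter_upwards [eventually_ge_atTop (9:ℝ)] with d hd
    exact Stmt10.upper hd
end

section
/- For d > 0, let I₁ = ∫_{arcsinh(d)}^{arcsinh(d+1)} sinh²(s)/√(cosh²(s) − 1 − d²) ds. Then I₁ ≤ (d+1)·log((√(1+2d) + √(2+2d+d²))/√(1+d²)) < (d+1)·log((√(1+2d) + √(2+2d+d²))/d). -/
open Real Set MeasureTheory intervalIntegral

theorem stmt_12 (d : ℝ) (hd : 0 < d) :
    (∫ s in Real.arsinh d..Real.arsinh (d + 1),
      Real.sinh s ^ 2 / Real.sqrt (Real.cosh s ^ 2 - 1 - d ^ 2)) ≤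
      (d + 1) * Real.log ((Real.sqrt (1 + 2 * d) + Real.sqrt (2 + 2 * d + d ^ 2)) /
        Real.sqrt (1 + d ^ 2)) ∧
    (d + 1) * Real.log ((Real.sqrt (1 + 2 * d) + Real.sqrt (2 + 2 * d + d ^ 2)) /
        Real.sqrt (1 + d ^ 2)) <
      (d + 1) * Real.log ((Real.sqrt (1 + 2 * d) + Real.sqrt (2 + 2 * d + d ^ 2)) / d) := by
  set a := Real.arsinh d with ha
  set b := Real.arsinh (d + 1) with hb
  have hab : a < b := Real.arsinh_lt_arsinh.2 (by linarith)
  have ha0 : 0 < a := by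
    rw [ha, ← Real.arsinh_zero]; exact Real.arsinh_lt_arsinh.2 hd
  set N := Real.sqrt (1 + 2 * d) + Real.sqrt (2 + 2 * d + d ^ 2) with hN
  set V := (d + 1) * Real.log (N / Real.sqrt (1 + d ^ 2)) with hV
  have hsq : (0:ℝ) < Real.sqrt (1 + d ^ 2) := Real.sqrt_pos.2 (by positivity)
  have hNs : Real.sqrt (1 + d ^ 2) ≤ N := by
    have h1 : Real.sqrt (1 + d ^ 2) ≤ Real.sqrt (2 + 2 * d + d ^ 2) :=
      Real.sqrt_le_sqrt (by nlinarith)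
    have h2 : (0:ℝ) ≤ Real.sqrt (1 + 2 * d) := Real.sqrt_nonneg _
    linarith
  have hVpos : 0 ≤ V := by
    apply mul_nonneg (by linarith)
    apply Real.log_nonneg
    rw [le_div_iff₀ hsq]; linarith
  constructor
  · -- main inequality
    set g : ℝ → ℝ := fun s => Real.sinh s ^ 2 / Real.sqrt (Real.cosh s ^ 2 - 1 - d ^ 2) with hg
    by_cases hint : IntervalIntegrable g volume a b
    · -- integrable case
      set u : ℝ → ℝ := fun s => Real.sinh s ^ 2 - d ^ 2 with hu
      have hueq : ∀ s, Real.cosh s ^ 2 - 1 - d ^ 2 = u s := by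
        intro s; rw [Real.cosh_sq]; ring
      set F : ℝ → ℝ := fun s => Real.log (Real.sqrt (u s) + Real.cosh s) with hF
      -- core estimate
      have core : ∀ c ∈ Ioc a b, (∫ s in c..b, g s) ≤ V := by
        intro c hc
        have hca : a < c := hc.1
        have hcb : c ≤ b := hc.2
        have hupos : ∀ s ∈ Icc c b, 0 < u s := by
          intro s hs
          have h1 : d < Real.sinh s := by
            calc d = Real.sinh a := (Real.sinh_arsinh d).symm
            _ < Real.sinh c := Real.sinh_lt_sinh.2 hca
            _ ≤ Real.sinh s := Real.sinh_le_sinh.2 hs.1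
          have : d ^ 2 < Real.sinh s ^ 2 := by nlinarith
          simp only [hu]; linarith
        have hsle : ∀ s ∈ Icc c b, Real.sinh s ≤ d + 1 := by
          intro s hs
          calc Real.sinh s ≤ Real.sinh b := Real.sinh_le_sinh.2 hs.2
          _ = d + 1 := Real.sinh_arsinh _
        have hsgt : ∀ s ∈ Icc c b, d < Real.sinh s := by
          intro s hs
          calc d = Real.sinh a := (Real.sinh_arsinh d).symm
          _ < Real.sinh c := Real.sinh_lt_sinh.2 hca
          _ ≤ Real.sinh s := Real.sinh_le_sinh.2 hs.1
        have hspos : ∀ s ∈ Icc c b, 0 < Real.sinh s := fun s hs => lt_trans hd (hsgt s hs)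
        -- derivative
        have hderiv : ∀ s ∈ uIcc c b, HasDerivAt F (Real.sinh s / Real.sqrt (u s)) s := by
          intro s hs
          rw [uIcc_of_le hcb] at hs
          have hus : 0 < u s := hupos s hs
          have hsu : 0 < Real.sqrt (u s) := Real.sqrt_pos.2 hus
          have hv : 0 < Real.sqrt (u s) + Real.cosh s := by
            have := Real.cosh_pos (x := s); linarith
          have hu' : HasDerivAt u (2 * Real.sinh s * Real.cosh s) s := by
            have := ((Real.hasDerivAt_sinh s).pow 2).sub_const (d ^ 2)
            exact this.congr_deriv (by push_cast; ring)
          have h1 : HasDerivAt (fun y => Real.sqrt (u y))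
              (2 * Real.sinh s * Real.cosh s / (2 * Real.sqrt (u s))) s :=
            hu'.sqrt (ne_of_gt hus)
          have h2 : HasDerivAt (fun y => Real.sqrt (u y) + Real.cosh y)
              (2 * Real.sinh s * Real.cosh s / (2 * Real.sqrt (u s)) + Real.sinh s) s :=
            h1.add (Real.hasDerivAt_cosh s)
          have h3 := h2.log (ne_of_gt hv)
          convert h3 using 1
          field_simp
          ring
        -- integrability of sinh/sqrt u on [c,b]
        have hcontu : ContinuousOn (fun s => Real.sinh s / Real.sqrt (u s)) (uIcc c b) := by
          rw [uIcc_of_le hcb]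
          apply ContinuousOn.div (Real.continuous_sinh).continuousOn
          · exact (Real.continuous_sqrt.comp (by continuity)).continuousOn
          · intro s hs; exact ne_of_gt (Real.sqrt_pos.2 (hupos s hs))
        have hint2 : IntervalIntegrable (fun s => Real.sinh s / Real.sqrt (u s)) volume c b :=
          hcontu.intervalIntegrable
        have hftc : (∫ s in c..b, Real.sinh s / Real.sqrt (u s)) = F b - F c :=
          integral_eq_sub_of_hasDerivAt hderiv hint2
        -- compare g with (d+1) * sinh/sqrt u
        have hmono : (∫ s in c..b, g s) ≤ ∫ s in c..b, (d + 1) * (Real.sinh s / Real.sqrt (u s)) := by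
          apply integral_mono_on hcb
          · refine hint.mono_set ?_
            rw [uIcc_of_le hcb, uIcc_of_le hab.le]
            exact Icc_subset_Icc hca.le le_rfl
          · exact (hint2.const_mul (d + 1))
          · intro s hs
            have hus := hupos s hs
            have hsu : 0 < Real.sqrt (u s) := Real.sqrt_pos.2 hus
            simp only [hg, hueq]
            rw [mul_div_assoc']
            rw [div_le_div_iff_of_pos_right hsu]
            have := hsle s hs
            nlinarith [hspos s hs]
        rw [intervalIntegral.integral_const_mul, hftc] at hmono
        -- bound F b - F c
        have hFa : F a = Real.log (Real.sqrt (1 + d ^ 2)) := by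
          simp only [hF, hu, ha]
          rw [Real.sinh_arsinh, Real.cosh_arsinh]
          norm_num
        have hFc : F a ≤ F c := by
          rw [hFa]
          apply Real.log_le_log hsq
          have h1 : Real.cosh a ≤ Real.cosh c := by
            rw [Real.cosh_le_cosh, abs_of_pos ha0, abs_of_pos (lt_trans ha0 hca)]
            exact hca.le
          have h2 : (0:ℝ) ≤ Real.sqrt (u c) := Real.sqrt_nonneg _
          rw [Real.cosh_arsinh] at h1
          linarith
        have hFb : F b = Real.log N := by
          simp only [hF, hu, hb, hN]
          rw [Real.sinh_arsinh, Real.cosh_arsinh]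
          congr 2
          · congr 1; ring
          · congr 1; ring
        have : F b - F c ≤ Real.log (N / Real.sqrt (1 + d ^ 2)) := by
          rw [Real.log_div (by positivity) (ne_of_gt hsq), hFb]
          linarith [hFc, hFa]
        calc (∫ s in c..b, g s) ≤ (d + 1) * (F b - F c) := hmono
        _ ≤ V := by rw [hV]; apply mul_le_mul_of_nonneg_left this (by linarith)
      -- limiting argument
      have hInt : IntegrableOn g (Icc a b) volume := by
        rw [integrableOn_Icc_iff_integrableOn_Ioc]
        rw [intervalIntegrable_iff, uIoc_of_le hab.le] at hint
        exact hint
      have hcont : ContinuousOn (fun x => ∫ t in a..x, g t) (uIcc a b) := by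
        apply continuousOn_primitive_interval
        rw [uIcc_of_le hab.le]; exact hInt
      have hadd : ∀ c ∈ Ioc a b, (∫ t in a..c, g t) + (∫ t in c..b, g t) = ∫ t in a..b, g t := by
        intro c hc
        apply integral_add_adjacent_intervals
        · refine hint.mono_set ?_
          rw [uIcc_of_le hc.1.le, uIcc_of_le hab.le]
          exact Icc_subset_Icc le_rfl hc.2
        · refine hint.mono_set ?_
          rw [uIcc_of_le hc.2, uIcc_of_le hab.le]
          exact Icc_subset_Icc hc.1.le le_rfl
      have hten : Filter.Tendsto (fun c => (∫ t in a..b, g t) - (∫ t in a..c, g t))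
          (nhdsWithin a (Ioc a b)) (nhds (∫ t in a..b, g t)) := by
        have h0 : Filter.Tendsto (fun c => ∫ t in a..c, g t) (nhdsWithin a (Ioc a b))
            (nhds (∫ t in a..a, g t)) := by
          apply ((hcont a (by rw [uIcc_of_le hab.le]; exact ⟨le_rfl, hab.le⟩)).mono ?_).tendsto
          rw [uIcc_of_le hab.le]; exact Ioc_subset_Icc_self.trans (Icc_subset_Icc le_rfl le_rfl)
        rw [integral_same] at h0
        have := (tendsto_const_nhds (α := ℝ) (x := ∫ t in a..b, g t)
          (f := nhdsWithin a (Ioc a b))).sub h0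
        simpa using this
      have hev : ∀ᶠ c in nhdsWithin a (Ioc a b),
          (∫ t in a..b, g t) - (∫ t in a..c, g t) ≤ V := by
        filter_upwards [self_mem_nhdsWithin] with c hc
        have := core c hc
        have h2 := hadd c hc
        linarith
      have := left_nhdsWithin_Ioc_neBot hab
      exact le_of_tendsto hten hev
    · rw [integral_undef hint]; exact hVpos
  · -- strict inequality
    apply mul_lt_mul_of_pos_left _ (by linarith)
    apply Real.log_lt_log
    · apply div_pos _ hsq
      have : (0:ℝ) < Real.sqrt (2 + 2 * d + d ^ 2) := Real.sqrt_pos.2 (by nlinarith)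
      have := Real.sqrt_nonneg (1 + 2 * d)
      rw [hN]; linarith
    · apply div_lt_div_of_pos_left
      · have : (0:ℝ) < Real.sqrt (2 + 2 * d + d ^ 2) := Real.sqrt_pos.2 (by nlinarith)
        have := Real.sqrt_nonneg (1 + 2 * d)
        rw [hN]; linarith
      · exact hd
      · exact (Real.lt_sqrt hd.le).2 (by nlinarith)
end

section
/- For d > 0 and R > arcsinh(d+1), let I₂ = ∫_{arcsinh(d+1)}^{R} sinh²(s)/√(cosh²(s) − 1 − d²) ds. Then I₂ < (√(e^{2R} − 2 − 4d²) − √(8d + 3))/2, provided e^{2R} > 2 + 4d². -/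
open Real

theorem stmt_13 (d R : ℝ) (hd : 0 < d) (hR : Real.arsinh (d + 1) < R)
    (hexp : 2 + 4 * d ^ 2 < Real.exp (2 * R)) :
    (∫ s in Real.arsinh (d + 1)..R,
      Real.sinh s ^ 2 / Real.sqrt (Real.cosh s ^ 2 - 1 - d ^ 2)) <
    (Real.sqrt (Real.exp (2 * R) - 2 - 4 * d ^ 2) - Real.sqrt (8 * d + 3)) / 2 := by
  set a := Real.arsinh (d + 1) with ha
  have ha_pos : 0 < a := Real.arsinh_pos_iff.2 (by linarith)
  have hc2 : Real.sqrt (1 + (d+1)^2) ^ 2 = 1 + (d+1)^2 := Real.sq_sqrt (by positivity)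
  have hc0 : 0 ≤ Real.sqrt (1 + (d+1)^2) := Real.sqrt_nonneg _
  have hc : d + 1 ≤ Real.sqrt (1 + (d+1)^2) := by nlinarith
  have hexpa : Real.exp (2 * a) = ((d+1) + Real.sqrt (1 + (d+1)^2))^2 := by
    rw [two_mul, Real.exp_add, ha, Real.exp_arsinh]; ring
  have hkey : 8 * d + 3 ≤ Real.exp (2 * a) - 2 - 4 * d ^ 2 := by
    rw [hexpa]; nlinarith
  have hd38 : (0:ℝ) < 8*d+3 := by linarith
  have hu_pos : ∀ s, a ≤ s → 8 * d + 3 ≤ Real.exp (2*s) - 2 - 4*d^2 := by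
    intro s hs
    have : Real.exp (2*a) ≤ Real.exp (2*s) := Real.exp_le_exp.2 (by linarith)
    linarith
  have hden_pos : ∀ s, a ≤ s → 2*d + 1 ≤ Real.cosh s ^ 2 - 1 - d ^ 2 := by
    intro s hs
    have h1 : d + 1 ≤ Real.sinh s := by
      have := Real.sinh_le_sinh.2 hs
      rwa [ha, Real.sinh_arsinh] at this
    rw [Real.cosh_sq]
    nlinarith
  set f : ℝ → ℝ := fun s => Real.sinh s ^ 2 / Real.sqrt (Real.cosh s ^ 2 - 1 - d ^ 2) with hfdef
  set g : ℝ → ℝ := fun s => Real.exp (2*s) / (2 * Real.sqrt (Real.exp (2*s) - 2 - 4*d^2)) with hg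
  set F : ℝ → ℝ := fun s => Real.sqrt (Real.exp (2*s) - 2 - 4*d^2) / 2 with hF
  have hsqrt4 : Real.sqrt 4 = 2 := by
    rw [show (4:ℝ) = 2^2 by norm_num, Real.sqrt_sq (by norm_num : (0:ℝ) ≤ 2)]
  -- pointwise strict inequality on [a, R]
  have hptw : ∀ s ∈ Set.Icc a R, f s < g s := by
    intro s hs
    obtain ⟨hs1, hs2⟩ := hs
    have hspos : 0 < s := lt_of_lt_of_le ha_pos hs1
    have hu := hu_pos s hs1
    have hD := hden_pos s hs1
    have hsqu_pos : 0 < Real.sqrt (Real.exp (2*s) - 2 - 4*d^2) :=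
      Real.sqrt_pos.2 (by linarith)
    have hE : Real.exp (2*s) = Real.exp s ^ 2 := by rw [two_mul, Real.exp_add]; ring
    have hEneg : Real.exp (-s) * Real.exp s = 1 := by rw [← Real.exp_add]; simp
    have hEneg1 : Real.exp (-s) < 1 := Real.exp_lt_one_iff.2 (by linarith)
    have h0 : 0 < Real.exp (-s) := Real.exp_pos _
    have hsinh : Real.sinh s = (Real.exp s - Real.exp (-s)) / 2 := Real.sinh_eq s
    have hnum : Real.sinh s ^ 2 < Real.exp (2*s) / 4 := by
      rw [hsinh, hE]; nlinarith
    have hdenb : Real.sqrt (Real.exp (2*s) - 2 - 4*d^2) / 2 ≤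
        Real.sqrt (Real.cosh s ^ 2 - 1 - d ^ 2) := by
      have h1 : Real.sqrt (Real.exp (2*s) - 2 - 4*d^2) / 2 =
          Real.sqrt ((Real.exp (2*s) - 2 - 4*d^2)/4) := by
        rw [Real.sqrt_div (by linarith) 4, hsqrt4]
      rw [h1]
      apply Real.sqrt_le_sqrt
      rw [Real.cosh_sq, Real.sinh_eq, hE]
      nlinarith
    have hDpos : 0 < Real.sqrt (Real.cosh s ^ 2 - 1 - d ^ 2) := by linarith
    calc f s ≤ Real.sinh s ^ 2 / (Real.sqrt (Real.exp (2*s) - 2 - 4*d^2) / 2) :=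
          div_le_div_of_nonneg_left (by positivity) (by linarith) hdenb
      _ < (Real.exp (2*s) / 4) / (Real.sqrt (Real.exp (2*s) - 2 - 4*d^2) / 2) :=
          (div_lt_div_iff_of_pos_right (by linarith)).2 hnum
      _ = g s := by
          rw [hg]
          field_simp
          ring
  -- continuity
  have hfc : ContinuousOn f (Set.Icc a R) := by
    apply ContinuousOn.div ((Real.continuous_sinh.pow 2).continuousOn)
    · exact (Real.continuous_sqrt.comp
        (((Real.continuous_cosh.pow 2).sub continuous_const).sub continuous_const)).continuousOn
    · intro x hx
      have := hden_pos x hx.1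
      have : 0 < Real.sqrt (Real.cosh x ^ 2 - 1 - d ^ 2) := Real.sqrt_pos.2 (by linarith)
      exact ne_of_gt this
  have hgc : ContinuousOn g (Set.Icc a R) := by
    have hce : Continuous fun s : ℝ => Real.exp (2*s) :=
      Real.continuous_exp.comp (continuous_const.mul continuous_id)
    apply ContinuousOn.div hce.continuousOn
    · exact (continuous_const.mul (Real.continuous_sqrt.comp
        ((hce.sub continuous_const).sub continuous_const))).continuousOn
    · intro x hx
      have := hu_pos x hx.1
      have : 0 < Real.sqrt (Real.exp (2*x) - 2 - 4*d^2) := Real.sqrt_pos.2 (by linarith)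
      positivity
  -- integral of g
  have hderiv : ∀ x ∈ Set.uIcc a R, HasDerivAt F (g x) x := by
    intro x hx
    rw [Set.uIcc_of_le hR.le] at hx
    have hu := hu_pos x hx.1
    have hne : Real.exp (2*x) - 2 - 4*d^2 ≠ 0 := ne_of_gt (by linarith)
    have hsq : 0 < Real.sqrt (Real.exp (2*x) - 2 - 4*d^2) := Real.sqrt_pos.2 (by linarith)
    have h1 : HasDerivAt (fun s => Real.exp (2*s) - 2 - 4*d^2) (Real.exp (2*x) * 2) x := by
      have h2 : HasDerivAt (fun s : ℝ => 2*s) 2 x := by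
        simpa using (hasDerivAt_id x).const_mul 2
      simpa using (h2.exp.sub_const 2).sub_const (4*d^2)
    have h3 := (h1.sqrt hne).div_const 2
    refine h3.congr_deriv ?_
    rw [hg]
    field_simp
  have hgint : IntervalIntegrable g MeasureTheory.volume a R :=
    hgc.intervalIntegrable_of_Icc hR.le
  have hInt : (∫ s in a..R, g s) = F R - F a :=
    intervalIntegral.integral_eq_sub_of_hasDerivAt hderiv hgint
  have hlt : (∫ s in a..R, f s) < ∫ s in a..R, g s :=
    intervalIntegral.integral_lt_integral_of_continuousOn_of_le_of_exists_lt hR hfc hgc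
      (fun x hx => (hptw x ⟨hx.1.le, hx.2⟩).le)
      ⟨a, Set.left_mem_Icc.2 hR.le, hptw a (Set.left_mem_Icc.2 hR.le)⟩
  have hFa : Real.sqrt (8*d+3) / 2 ≤ F a := by
    rw [hF]
    have := Real.sqrt_le_sqrt hkey
    linarith
  have hFR : F R = Real.sqrt (Real.exp (2*R) - 2 - 4*d^2) / 2 := rfl
  have : (∫ s in a..R, f s) < F R - F a := by linarith [hInt ▸ hlt]
  calc (∫ s in a..R, f s) < F R - F a := this
    _ ≤ (Real.sqrt (Real.exp (2 * R) - 2 - 4 * d ^ 2) - Real.sqrt (8 * d + 3)) / 2 := by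
        rw [hFR]; linarith
end

section
/- Fix τ ∈ ℝ and let c₁ = 4τ²/(1+4τ²), c₂ = 2/√(1+4τ²) + (8τ²/(1+4τ²))·log(√2·√(1+4τ²)/(1+√(1+4τ²))). Then for all R > log 3, ∫_0^R sinh(s)·√((cosh(s) + (1−4τ²)/(1+4τ²))/(cosh(s)+1)) ds > (1/2)·√(e^{2R} − 4) − c₁·R − c₂. -/
open Real

lemma deriv_G (A : ℝ) (hA : -1 < A) (s : ℝ) :
    HasDerivAt (fun s => Real.sqrt ((Real.cosh s + A) * (Real.cosh s + 1)) +
      (A - 1) * Real.log (Real.sqrt (Real.cosh s + A) + Real.sqrt (Real.cosh s + 1)))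
      (Real.sinh s * Real.sqrt ((Real.cosh s + A) / (Real.cosh s + 1))) s := by
  have hc1 : (1:ℝ) ≤ Real.cosh s := Real.one_le_cosh s
  have hpA : 0 < Real.cosh s + A := by linarith
  have hp1 : 0 < Real.cosh s + 1 := by linarith
  set p := Real.sqrt (Real.cosh s + A) with hp
  set q := Real.sqrt (Real.cosh s + 1) with hq
  have hppos : 0 < p := Real.sqrt_pos.mpr hpA
  have hqpos : 0 < q := Real.sqrt_pos.mpr hp1
  have hp2 : p ^ 2 = Real.cosh s + A := Real.sq_sqrt hpA.le
  have hq2 : q ^ 2 = Real.cosh s + 1 := Real.sq_sqrt hp1.le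
  have hcA : HasDerivAt (fun s => Real.cosh s + A) (Real.sinh s) s :=
    (Real.hasDerivAt_cosh s).add_const A
  have hc1' : HasDerivAt (fun s => Real.cosh s + 1) (Real.sinh s) s :=
    (Real.hasDerivAt_cosh s).add_const 1
  have hmul : HasDerivAt (fun s => (Real.cosh s + A) * (Real.cosh s + 1))
      (Real.sinh s * (Real.cosh s + 1) + (Real.cosh s + A) * Real.sinh s) s := hcA.mul hc1'
  have hS : HasDerivAt (fun s => Real.sqrt ((Real.cosh s + A) * (Real.cosh s + 1)))
      ((Real.sinh s * (Real.cosh s + 1) + (Real.cosh s + A) * Real.sinh s) /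
        (2 * Real.sqrt ((Real.cosh s + A) * (Real.cosh s + 1)))) s :=
    hmul.sqrt (by positivity)
  have hsum : HasDerivAt (fun s => Real.sqrt (Real.cosh s + A) + Real.sqrt (Real.cosh s + 1))
      (Real.sinh s / (2 * p) + Real.sinh s / (2 * q)) s :=
    (hcA.sqrt hpA.ne').add (hc1'.sqrt hp1.ne')
  have hL : HasDerivAt (fun s => Real.log (Real.sqrt (Real.cosh s + A) + Real.sqrt (Real.cosh s + 1)))
      ((Real.sinh s / (2 * p) + Real.sinh s / (2 * q)) / (p + q)) s :=
    hsum.log (by positivity)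
  have := hS.add (hL.const_mul (A - 1))
  refine this.congr_deriv ?_
  have hPQ : Real.sqrt ((Real.cosh s + A) * (Real.cosh s + 1)) = p * q :=
    Real.sqrt_mul hpA.le _
  have hdiv : Real.sqrt ((Real.cosh s + A) / (Real.cosh s + 1)) = p / q :=
    Real.sqrt_div hpA.le _
  rw [hPQ, hdiv]
  have hA1 : A - 1 = p ^ 2 - q ^ 2 := by rw [hp2, hq2]; ring
  rw [hA1, ← hp2, ← hq2]
  field_simp
  ring

lemma key1 (A E c : ℝ) (hA : -1 < A) (hE : 3 < E) (hc : E / 2 < c) :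
    (E ^ 2 - 4) / 4 < (c + A) * (c + 1) := by
  nlinarith [mul_pos (show (0:ℝ) < A + 1 by linarith) (show (0:ℝ) < E / 2 + 1 by linarith),
    mul_pos (show (0:ℝ) < c - E / 2 by linarith) (show (0:ℝ) < c + 1 by linarith),
    mul_nonneg (show (0:ℝ) ≤ E / 2 + A by linarith) (show (0:ℝ) ≤ c - E / 2 by linarith)]

set_option maxHeartbeats 1000000 in
theorem stmt_18 (τ : ℝ)
    (c₁ c₂ : ℝ)
    (hc₁ : c₁ = 4 * τ ^ 2 / (1 + 4 * τ ^ 2))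
    (hc₂ : c₂ = 2 / Real.sqrt (1 + 4 * τ ^ 2) +
      (8 * τ ^ 2 / (1 + 4 * τ ^ 2)) *
        Real.log (Real.sqrt 2 * Real.sqrt (1 + 4 * τ ^ 2) / (1 + Real.sqrt (1 + 4 * τ ^ 2)))) :
    ∀ R : ℝ, Real.log 3 < R →
      (∫ s in (0 : ℝ)..R,
        Real.sinh s * Real.sqrt ((Real.cosh s + (1 - 4 * τ ^ 2) / (1 + 4 * τ ^ 2)) /
          (Real.cosh s + 1))) >
      (1 / 2) * Real.sqrt (Real.exp (2 * R) - 4) - c₁ * R - c₂ := by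
  intro R hR
  have hden : (0:ℝ) < 1 + 4 * τ ^ 2 := by positivity
  set A : ℝ := (1 - 4 * τ ^ 2) / (1 + 4 * τ ^ 2) with hAdef
  have hA : -1 < A := by
    rw [hAdef, lt_div_iff₀ hden]; nlinarith
  have hA1 : A ≤ 1 := by
    rw [hAdef, div_le_one hden]; nlinarith
  -- FTC
  have hcont : Continuous (fun s => Real.sinh s *
      Real.sqrt ((Real.cosh s + A) / (Real.cosh s + 1))) := by
    apply Real.continuous_sinh.mul
    apply Real.continuous_sqrt.comp
    apply Continuous.div (Real.continuous_cosh.add continuous_const)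
      (Real.continuous_cosh.add continuous_const)
    intro x
    have := Real.one_le_cosh x
    show Real.cosh x + 1 ≠ 0
    exact ne_of_gt (by linarith)
  have hFTC := intervalIntegral.integral_eq_sub_of_hasDerivAt
    (f := fun s => Real.sqrt ((Real.cosh s + A) * (Real.cosh s + 1)) +
      (A - 1) * Real.log (Real.sqrt (Real.cosh s + A) + Real.sqrt (Real.cosh s + 1)))
    (fun s _ => deriv_G A hA s) (hcont.intervalIntegrable 0 R)
  rw [hFTC]
  -- basic quantities
  set T : ℝ := Real.sqrt (1 + 4 * τ ^ 2) with hTdef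
  have hT2 : T ^ 2 = 1 + 4 * τ ^ 2 := Real.sq_sqrt hden.le
  have hT1 : 1 ≤ T := by
    nlinarith [Real.sqrt_nonneg (1 + 4 * τ ^ 2), hT2]
  have hTpos : 0 < T := by linarith
  set E : ℝ := Real.exp R with hEdef
  have hE3 : 3 < E := by
    rw [hEdef, show (3:ℝ) = Real.exp (Real.log 3) from (Real.exp_log (by norm_num)).symm]
    exact Real.exp_lt_exp.mpr hR
  have hEpos : 0 < E := by linarith
  have hcosh : Real.cosh R = (E + E⁻¹) / 2 := by
    rw [Real.cosh_eq, hEdef, Real.exp_neg]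
  have hEinv : E⁻¹ < 1 / 3 := by
    rw [inv_lt_comm₀ (by linarith) (by norm_num)]; linarith
  have hEinvpos : 0 < E⁻¹ := by positivity
  have hcl : E / 2 < Real.cosh R := by rw [hcosh]; linarith
  have hcu : Real.cosh R + 1 ≤ E := by rw [hcosh]; linarith
  have hcR1 : (1:ℝ) ≤ Real.cosh R := Real.one_le_cosh R
  have hpA : 0 < Real.cosh R + A := by linarith
  have hp1 : 0 < Real.cosh R + 1 := by linarith
  set P := Real.sqrt (Real.cosh R + A) with hPdef
  set Q := Real.sqrt (Real.cosh R + 1) with hQdef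
  have hPpos : 0 < P := Real.sqrt_pos.mpr hpA
  have hQpos : 0 < Q := Real.sqrt_pos.mpr hp1
  have hc₁nn : 0 ≤ c₁ := by rw [hc₁]; positivity
  -- Claim 1 : (1/2) √(e^{2R} - 4) < P * Q
  have hE2 : Real.exp (2 * R) = E ^ 2 := by
    rw [two_mul, Real.exp_add, hEdef]; ring
  have hE2pos : (0:ℝ) ≤ E ^ 2 - 4 := by nlinarith
  have claim1 : (1 / 2) * Real.sqrt (Real.exp (2 * R) - 4) < P * Q := by
    rw [hE2]
    have h1 : (1 / 2) * Real.sqrt (E ^ 2 - 4) = Real.sqrt ((E ^ 2 - 4) / 4) := by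
      rw [Real.sqrt_div hE2pos, show Real.sqrt 4 = 2 from ?_]
      · ring
      · rw [show (4:ℝ) = 2 ^ 2 by norm_num, Real.sqrt_sq (by norm_num)]
    rw [h1, show P * Q = Real.sqrt ((Real.cosh R + A) * (Real.cosh R + 1)) from
      (Real.sqrt_mul hpA.le _).symm]
    exact Real.sqrt_lt_sqrt (by positivity) (key1 A E (Real.cosh R) hA hE3 hcl)
  -- Claim 2 : log ((P+Q)/2) ≤ R / 2
  have claim2 : Real.log ((P + Q) / 2) ≤ R / 2 := by
    have hPQ : P ≤ Q := Real.sqrt_le_sqrt (by linarith)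
    have h1 : (P + Q) / 2 ≤ Q := by linarith
    have h2 : Real.log ((P + Q) / 2) ≤ Real.log Q :=
      Real.log_le_log (by positivity) h1
    have h3 : Real.log Q = Real.log (Real.cosh R + 1) / 2 := Real.log_sqrt hp1.le
    have h4 : Real.log (Real.cosh R + 1) ≤ R := by
      calc Real.log (Real.cosh R + 1) ≤ Real.log E := Real.log_le_log (by linarith) hcu
      _ = R := by rw [hEdef, Real.log_exp]
    linarith [h2, h3, h4]
  -- algebraic identities
  have h1A : 1 + A = 2 / T ^ 2 := by rw [hT2, hAdef]; field_simp; norm_num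
  have hA2 : A - 1 = -(2 * c₁) := by rw [hAdef, hc₁]; field_simp; ring
  have hc₂' : c₂ = 2 / T + 2 * c₁ * Real.log (Real.sqrt 2 * T / (1 + T)) := by
    rw [hc₂, hc₁]; ring
  have e2 : Real.sqrt (1 + A) = Real.sqrt 2 / T := by
    rw [h1A, show (2:ℝ) / T ^ 2 = (Real.sqrt 2 / T) ^ 2 by
      rw [div_pow, Real.sq_sqrt (by norm_num : (0:ℝ) ≤ 2)]]
    exact Real.sqrt_sq (by positivity)
  have e1 : Real.sqrt ((1 + A) * (1 + 1)) = 2 / T := by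
    rw [h1A, show (2:ℝ) / T ^ 2 * (1 + 1) = (2 / T) ^ 2 by ring]
    exact Real.sqrt_sq (by positivity)
  have e3 : Real.sqrt ((1:ℝ) + 1) = Real.sqrt 2 := by norm_num
  have hs2pos : (0:ℝ) < Real.sqrt 2 := Real.sqrt_pos.mpr (by norm_num)
  have hlog2 : Real.log (Real.sqrt 2 / T + Real.sqrt 2) +
      Real.log (Real.sqrt 2 * T / (1 + T)) = Real.log 2 := by
    rw [← Real.log_mul (by positivity) (by positivity)]
    congr 1
    have h2 : Real.sqrt 2 * Real.sqrt 2 = 2 := Real.mul_self_sqrt (by norm_num)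
    field_simp
    nlinarith [h2]
  have hlogdiv : Real.log ((P + Q) / 2) = Real.log (P + Q) - Real.log 2 :=
    Real.log_div (by positivity) (by norm_num)
  have hGval : (fun s => Real.sqrt ((Real.cosh s + A) * (Real.cosh s + 1)) +
        (A - 1) * Real.log (Real.sqrt (Real.cosh s + A) + Real.sqrt (Real.cosh s + 1))) R -
      (fun s => Real.sqrt ((Real.cosh s + A) * (Real.cosh s + 1)) +
        (A - 1) * Real.log (Real.sqrt (Real.cosh s + A) + Real.sqrt (Real.cosh s + 1))) 0 =
      P * Q - 2 * c₁ * Real.log ((P + Q) / 2) - c₂ := by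
    simp only [Real.cosh_zero]
    rw [show Real.sqrt ((Real.cosh R + A) * (Real.cosh R + 1)) = P * Q from
      Real.sqrt_mul hpA.le _]
    rw [e1, e2, e3, hA2, hc₂', hlogdiv]
    linear_combination (2 * c₁) * hlog2
  rw [hGval]
  have hfin : c₁ * Real.log ((P + Q) / 2) ≤ c₁ * (R / 2) :=
    mul_le_mul_of_nonneg_left claim2 hc₁nn
  linarith [claim1, hfin]
end
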